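/- arXiv:2302.02320 — 2 statements merged into one kernel-verified Lean document; each statement's English description precedes it below -/
import Mathlib

section
/- (Campbell–Hausdorff commutation formula for differences.) Let Z and Y be left invariant vector fields on H^n, let 1 ≤ p < ∞, let v ∈ HW^{1,p}(Ω) (with weak derivative Yv ∈ L^p) and suppose the weak derivative [Y,Z]v exists and lies in L^p_loc(Ω). Set ṽ(x) = v(x e^{sZ}). Then Yṽ ∈ L^p_loc(Ω) and, for x and x e^{sZ} in Ω, Y(v(x e^{sZ})) = (Yv)(x e^{sZ}) + s([Y,Z]v)(x e^{sZ}); consequently, for s ≠ 0, Y(Δ_{Z,s}v)(x) = Δ_{Z,s}(Yv)(x) + s([Y,Z]v)(x e^{sZ}). -/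
open MeasureTheory Real

noncomputable section

/-- Points of the Heisenberg group ℍⁿ: horizontal coordinates and vertical coordinate. -/
abbrev Hpt (n : ℕ) : Type := (Fin (2 * n) → ℝ) × ℝ

/-- Embedding of the first block of indices `{1,…,n}` into `{1,…,2n}`. -/
def finL (n : ℕ) (i : Fin n) : Fin (2 * n) := ⟨(i : ℕ), by have := i.isLt; omega⟩

/-- Embedding of the second block of indices `{n+1,…,2n}` into `{1,…,2n}`. -/
def finR (n : ℕ) (i : Fin n) : Fin (2 * n) := ⟨n + (i : ℕ), by have := i.isLt; omega⟩

/-- Heisenberg group multiplication. -/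
def Hmul (n : ℕ) (x y : Hpt n) : Hpt n :=
  (x.1 + y.1,
    x.2 + y.2 + (1 / 2) * ∑ i : Fin n,
      (x.1 (finL n i) * y.1 (finR n i) - x.1 (finR n i) * y.1 (finL n i)))

/-- Heisenberg group inverse. -/
def Hinv (n : ℕ) (x : Hpt n) : Hpt n := (-x.1, -x.2)

/-- Korányi gauge. -/
def Knorm (n : ℕ) (x : Hpt n) : ℝ :=
  ((∑ i, (x.1 i) ^ 2) ^ 2 + x.2 ^ 2) ^ ((1 : ℝ) / 4)

/-- Korányi distance. -/
def Kdist (n : ℕ) (x y : Hpt n) : ℝ := Knorm n (Hmul n (Hinv n x) y)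

/-- Korányi ball. -/
def Kball (n : ℕ) (x₀ : Hpt n) (r : ℝ) : Set (Hpt n) := {x | Kdist n x₀ x < r}

/-- Coefficient of `∂ₜ` in the horizontal vector field `X_j`. -/
def xcoef (n : ℕ) (x : Hpt n) (j : Fin (2 * n)) : ℝ :=
  if h : (j : ℕ) < n then -(x.1 ⟨n + (j : ℕ), by omega⟩) / 2
  else x.1 ⟨(j : ℕ) - n, by have := j.isLt; omega⟩ / 2

/-- The horizontal vector field `X_j` applied to a differentiable function. -/
def Xop (n : ℕ) (j : Fin (2 * n)) (φ : Hpt n → ℝ) (x : Hpt n) : ℝ :=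
  fderiv ℝ φ x (Pi.single j 1, 0) + xcoef n x j * fderiv ℝ φ x (0, 1)

/-- The vertical vector field `T = ∂ₜ` applied to a differentiable function. -/
def Tvf (n : ℕ) (φ : Hpt n → ℝ) (x : Hpt n) : ℝ := fderiv ℝ φ x (0, 1)

/-- A general left invariant vector field with constant coefficient vector `c`. -/
def Zop (n : ℕ) (c : Hpt n) (φ : Hpt n → ℝ) (x : Hpt n) : ℝ :=
  (∑ l, c.1 l * Xop n l φ x) + c.2 * Tvf n φ x

/-- The coefficient of `T` in the commutator `[Y,Z]` of left invariant fields. -/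
def commCoef (n : ℕ) (cY cZ : Hpt n) : ℝ :=
  ∑ i : Fin n, (cY.1 (finL n i) * cZ.1 (finR n i) - cY.1 (finR n i) * cZ.1 (finL n i))

/-- Right translation `x ↦ x ∘ e^{sZ}` associated to the left invariant field `Z`. -/
def zTrans (n : ℕ) (c : Hpt n) (s : ℝ) (x : Hpt n) : Hpt n :=
  Hmul n x (s • c.1, s * c.2)

/-- Vertical translation `x ↦ x e^{sT}`. -/
def tTrans (n : ℕ) (s : ℝ) (x : Hpt n) : Hpt n := (x.1, x.2 + s)

/-- First order Nirenberg difference along `Z`. -/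
def delta1 (n : ℕ) (c : Hpt n) (s : ℝ) (v : Hpt n → ℝ) (x : Hpt n) : ℝ :=
  v (zTrans n c s x) - v x

/-- Second order Nirenberg difference along `Z`. -/
def delta2 (n : ℕ) (c : Hpt n) (s : ℝ) (v : Hpt n → ℝ) (x : Hpt n) : ℝ :=
  v (zTrans n c s x) + v (zTrans n c (-s) x) - 2 * v x

/-- Fractional difference quotient of order `α` along `Z` (signed denominator). -/
def DZ (n : ℕ) (c : Hpt n) (s α : ℝ) (v : Hpt n → ℝ) (x : Hpt n) : ℝ :=
  (v (zTrans n c s x) - v x) / (Real.sign s * |s| ^ α)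

/-- Fractional difference quotient of order `γ` along `T` for scalar functions. -/
def DTs (n : ℕ) (s γ : ℝ) (v : Hpt n → ℝ) (x : Hpt n) : ℝ :=
  (v (tTrans n s x) - v x) / (Real.sign s * |s| ^ γ)

/-- Fractional difference quotient of order `γ` along `T` for `ℝ^N`-valued functions. -/
def DTv (n N : ℕ) (s γ : ℝ) (u : Hpt n → Fin N → ℝ) (x : Hpt n) (i : Fin N) : ℝ :=
  (u (tTrans n s x) i - u x i) / (Real.sign s * |s| ^ γ)

/-- Euclidean norm of a vector. -/
def vnorm {N : ℕ} (v : Fin N → ℝ) : ℝ := Real.sqrt (∑ i, (v i) ^ 2)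

/-- Frobenius norm of a matrix. -/
def mnorm {N M : ℕ} (P : Fin N → Fin M → ℝ) : ℝ := Real.sqrt (∑ i, ∑ j, (P i j) ^ 2)

/-- Frobenius inner product of matrices. -/
def minner {N M : ℕ} (P Q : Fin N → Fin M → ℝ) : ℝ := ∑ i, ∑ j, P i j * Q i j

/-- Frobenius norm of a 3-tensor. -/
def t3norm {N M L : ℕ} (v : Fin N → Fin M → Fin L → ℝ) : ℝ :=
  Real.sqrt (∑ i, ∑ j, ∑ l, (v i j l) ^ 2)

/-- A smooth test function compactly supported in `Ω`. -/
structure IsTest (n : ℕ) (Ω : Set (Hpt n)) (φ : Hpt n → ℝ) : Prop where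
  smooth : ContDiff ℝ (⊤ : ℕ∞) φ
  cpt : HasCompactSupport φ
  supp : tsupport φ ⊆ Ω

/-- `g` is the weak derivative of `u` along the first order operator `Z` on `Ω`. -/
def HasWeakDerivAlong (n : ℕ) (Z : (Hpt n → ℝ) → Hpt n → ℝ) (Ω : Set (Hpt n))
    (u g : Hpt n → ℝ) : Prop :=
  ∀ φ : Hpt n → ℝ, IsTest n Ω φ → ∫ x, g x * φ x = -∫ x, u x * Z φ x

/-- Componentwise weak derivative for `ℝ^N`-valued functions. -/
def HasWeakDerivAlongV (n N : ℕ) (Z : (Hpt n → ℝ) → Hpt n → ℝ) (Ω : Set (Hpt n))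
    (u g : Hpt n → Fin N → ℝ) : Prop :=
  ∀ i : Fin N, HasWeakDerivAlong n Z Ω (fun x => u x i) (fun x => g x i)

/-- `Du` is the weak horizontal gradient of `u` on `Ω`. -/
def IsHGrad (n N : ℕ) (Ω : Set (Hpt n)) (u : Hpt n → Fin N → ℝ)
    (Du : Hpt n → Fin N → Fin (2 * n) → ℝ) : Prop :=
  ∀ j : Fin (2 * n), HasWeakDerivAlongV n N (Xop n j) Ω u (fun x i => Du x i j)

/-- Membership in the horizontal Sobolev space `HW^{1,p}(Ω)`, with horizontal
gradient `Du`. -/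
def MemHW (n N : ℕ) (Ω : Set (Hpt n)) (p : ℝ) (u : Hpt n → Fin N → ℝ)
    (Du : Hpt n → Fin N → Fin (2 * n) → ℝ) : Prop :=
  IsHGrad n N Ω u Du ∧
    MemLp (fun x => vnorm (u x)) (ENNReal.ofReal p) (volume.restrict Ω) ∧
    MemLp (fun x => mnorm (Du x)) (ENNReal.ofReal p) (volume.restrict Ω)

/-- The `L^m(Ω)` norm. -/
def LmNorm (n : ℕ) (Ω : Set (Hpt n)) (m : ℝ) (f : Hpt n → ℝ) : ℝ :=
  (eLpNorm f (ENNReal.ofReal m) (volume.restrict Ω)).toReal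

/-- The `L^∞(Ω)` norm. -/
def LinfNorm (n : ℕ) (Ω : Set (Hpt n)) (f : Hpt n → ℝ) : ℝ :=
  (eLpNorm f ⊤ (volume.restrict Ω)).toReal

/-- The constant `κ`. -/
def kappa (n : ℕ) (Ω : Set (Hpt n)) (m : ℝ) (a b k : Hpt n → ℝ) : ℝ :=
  1 + LmNorm n Ω m b + LmNorm n Ω m k
    + LinfNorm n Ω (fun x => (a x)⁻¹) * ((LmNorm n Ω m k) ^ 2 + (LmNorm n Ω m b) ^ 2)

/-- The structure conditions (1.3)–(1.7) of the paper (the condition relating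
`m` and `p` is stated separately in each theorem). -/
structure StructCond (n N : ℕ) (Ω : Set (Hpt n))
    (A : Hpt n → (Fin N → Fin (2 * n) → ℝ) → Fin N → Fin (2 * n) → ℝ)
    (a b k : Hpt n → ℝ) (p q m cA : ℝ) : Prop where
  npos : 1 ≤ n
  bddΩ : Bornology.IsBounded Ω
  openΩ : IsOpen Ω
  hp1 : 1 < p
  hpq : p ≤ q
  hqpm : q / p < 1 + 1 / (2 * (n : ℝ) + 2) - 1 / m
  hcA : 0 < cA
  ellipticity : ∀ᵐ x ∂volume, x ∈ Ω → ∀ P U : Fin N → Fin (2 * n) → ℝ,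
    a x * (1 + mnorm P ^ 2 + mnorm U ^ 2) ^ ((p - 2) / 2) * mnorm (P - U) ^ 2
      ≤ minner (A x P - A x U) (P - U)
  growth : ∀ᵐ x ∂volume, x ∈ Ω → ∀ P U : Fin N → Fin (2 * n) → ℝ,
    mnorm (A x P - A x U)
      ≤ b x * (1 + mnorm P ^ 2 + mnorm U ^ 2) ^ ((q - 2) / 2) * mnorm (P - U)
  continuity : ∀ᵐ x ∂volume, ∀ᵐ y ∂volume, x ∈ Ω → y ∈ Ω →
    ∀ P : Fin N → Fin (2 * n) → ℝ,
    mnorm (A x P - A y P) ≤ cA * Kdist n x y * k x * (1 + mnorm P ^ 2) ^ ((q - 1) / 2)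
  ha_nonneg : ∀ᵐ x ∂(volume.restrict Ω), 0 ≤ a x
  hb_nonneg : ∀ᵐ x ∂(volume.restrict Ω), 0 ≤ b x
  hk_nonneg : ∀ᵐ x ∂(volume.restrict Ω), 0 ≤ k x
  ha_inv : MemLp (fun x => (a x)⁻¹) ⊤ (volume.restrict Ω)
  hb_m : MemLp b (ENNReal.ofReal m) (volume.restrict Ω)
  hk_m : MemLp k (ENNReal.ofReal m) (volume.restrict Ω)

/-- Weak solution of `div_H(A(x,∇_H u)) = 0` on `Ω`. -/
def IsWeakSolution (n N : ℕ) (Ω : Set (Hpt n))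
    (A : Hpt n → (Fin N → Fin (2 * n) → ℝ) → Fin N → Fin (2 * n) → ℝ)
    (u : Hpt n → Fin N → ℝ) (Du : Hpt n → Fin N → Fin (2 * n) → ℝ) : Prop :=
  ∀ φ : Hpt n → Fin N → ℝ,
    (∀ i, IsTest n Ω (fun x => φ x i)) →
    ∫ x, ∑ i, ∑ j, A x (Du x) i j * Xop n j (fun y => φ y i) x = 0

/-- Weak solution of the drift system `div_H(A(x,∇_H u)) + Tu = 0` on `Ω`,
for the fixed index `i`. -/
def IsWeakSolutionDrift (n N : ℕ) (Ω : Set (Hpt n))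
    (A : Hpt n → (Fin N → Fin (2 * n) → ℝ) → Fin N → Fin (2 * n) → ℝ)
    (u : Hpt n → Fin N → ℝ) (Du : Hpt n → Fin N → Fin (2 * n) → ℝ) (i : Fin n) : Prop :=
  ∀ φ : Hpt n → Fin N → ℝ,
    (∀ l, IsTest n Ω (fun x => φ x l)) →
    (∫ x, ∑ l, ∑ j, A x (Du x) l j * Xop n j (fun y => φ y l) x)
      + (∫ x, ∑ l, Du x l (finR n i) * Xop n (finL n i) (fun y => φ y l) x)
      - (∫ x, ∑ l, Du x l (finL n i) * Xop n (finR n i) (fun y => φ y l) x) = 0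

end


noncomputable section CHaux

open Function Set

/-! ### Auxiliary lemmas for the Campbell–Hausdorff commutation formula -/

lemma CH.sum_split (n : ℕ) (f : Fin (2 * n) → ℝ) :
    ∑ l, f l = (∑ i : Fin n, f (finL n i)) + ∑ i : Fin n, f (finR n i) := by
  have h := Equiv.sum_comp (finSumFinEquiv.trans (finCongr (by omega : n + n = 2 * n))) f
  rw [← h, Fintype.sum_sum_type]
  congr 1

/-- The bilinear symplectic-type form appearing in the Heisenberg product. -/
def CH.ell (n : ℕ) (a u : Fin (2 * n) → ℝ) : ℝ :=
  (1 / 2) * ∑ i : Fin n, (u (finL n i) * a (finR n i) - u (finR n i) * a (finL n i))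

lemma CH.ell_add (n : ℕ) (a u v : Fin (2 * n) → ℝ) :
    CH.ell n a (u + v) = CH.ell n a u + CH.ell n a v := by
  unfold CH.ell
  rw [← mul_add, ← Finset.sum_add_distrib]
  congr 1
  refine Finset.sum_congr rfl fun i _ => ?_
  simp only [Pi.add_apply]
  ring

lemma CH.ell_smul (n : ℕ) (a u : Fin (2 * n) → ℝ) (t : ℝ) :
    CH.ell n a (t • u) = t * CH.ell n a u := by
  unfold CH.ell
  have h : ∑ i : Fin n, ((t • u) (finL n i) * a (finR n i) - (t • u) (finR n i) * a (finL n i))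
      = t * ∑ i : Fin n, (u (finL n i) * a (finR n i) - u (finR n i) * a (finL n i)) := by
    rw [Finset.mul_sum]
    refine Finset.sum_congr rfl fun i _ => ?_
    simp only [Pi.smul_apply, smul_eq_mul]
    ring
  rw [h]; ring

lemma CH.ell_smul_left (n : ℕ) (a u : Fin (2 * n) → ℝ) (t : ℝ) :
    CH.ell n (t • a) u = t * CH.ell n a u := by
  unfold CH.ell
  have h : ∑ i : Fin n, (u (finL n i) * (t • a) (finR n i) - u (finR n i) * (t • a) (finL n i))
      = t * ∑ i : Fin n, (u (finL n i) * a (finR n i) - u (finR n i) * a (finL n i)) := by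
    rw [Finset.mul_sum]
    refine Finset.sum_congr rfl fun i _ => ?_
    simp only [Pi.smul_apply, smul_eq_mul]
    ring
  rw [h]; ring

lemma CH.ell_self (n : ℕ) (a : Fin (2 * n) → ℝ) : CH.ell n a a = 0 := by
  unfold CH.ell
  rw [Finset.sum_eq_zero fun i _ => by ring]
  ring

lemma CH.ell_zero (n : ℕ) (a : Fin (2 * n) → ℝ) : CH.ell n a 0 = 0 := by
  unfold CH.ell
  rw [Finset.sum_eq_zero fun i _ => by simp]
  ring

lemma CH.continuous_ell (n : ℕ) (a : Fin (2 * n) → ℝ) : Continuous (CH.ell n a) := by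
  unfold CH.ell
  exact continuous_const.mul (continuous_finset_sum _ fun i _ =>
    ((continuous_apply _).mul continuous_const).sub ((continuous_apply _).mul continuous_const))

/-- Linear part of the right translation `zTrans`. -/
def CH.zLin (n : ℕ) (a : Fin (2 * n) → ℝ) : Hpt n →ₗ[ℝ] Hpt n where
  toFun x := (x.1, x.2 + CH.ell n a x.1)
  map_add' x y := by
    refine Prod.ext rfl ?_
    simp only [Prod.fst_add, Prod.snd_add, CH.ell_add]
    ring
  map_smul' t x := by
    refine Prod.ext rfl ?_
    simp only [Prod.smul_fst, Prod.smul_snd, RingHom.id_apply, CH.ell_smul, smul_eq_mul]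
    ring

/-- Continuous linear version. -/
def CH.zCLM (n : ℕ) (a : Fin (2 * n) → ℝ) : Hpt n →L[ℝ] Hpt n :=
  (CH.zLin n a).toContinuousLinearMap

@[simp] lemma CH.zCLM_apply (n : ℕ) (a : Fin (2 * n) → ℝ) (x : Hpt n) :
    CH.zCLM n a x = (x.1, x.2 + CH.ell n a x.1) := rfl

lemma CH.zTrans_apply (n : ℕ) (c : Hpt n) (s : ℝ) (x : Hpt n) :
    zTrans n c s x = (x.1 + s • c.1, x.2 + s * CH.ell n c.1 x.1 + s * c.2) := by
  unfold zTrans Hmul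
  refine Prod.ext rfl ?_
  show x.2 + s * c.2 + (1 / 2) * ∑ i : Fin n,
      (x.1 (finL n i) * (s • c.1) (finR n i) - x.1 (finR n i) * (s • c.1) (finL n i))
    = x.2 + s * CH.ell n c.1 x.1 + s * c.2
  have h : (1 / 2 : ℝ) * ∑ i : Fin n,
      (x.1 (finL n i) * (s • c.1) (finR n i) - x.1 (finR n i) * (s • c.1) (finL n i))
      = CH.ell n (s • c.1) x.1 := rfl
  rw [h, CH.ell_smul_left]
  ring

lemma CH.zTrans_eq (n : ℕ) (c : Hpt n) (s : ℝ) :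
    zTrans n c s = fun x => CH.zCLM n (s • c.1) x + ((s • c.1, s * c.2) : Hpt n) := by
  funext x
  rw [CH.zTrans_apply]
  refine Prod.ext rfl ?_
  show x.2 + s * CH.ell n c.1 x.1 + s * c.2 = x.2 + CH.ell n (s • c.1) x.1 + s * c.2
  rw [CH.ell_smul_left]

lemma CH.hasFDerivAt_zTrans (n : ℕ) (c : Hpt n) (s : ℝ) (x : Hpt n) :
    HasFDerivAt (zTrans n c s) (CH.zCLM n (s • c.1)) x := by
  rw [CH.zTrans_eq]
  exact (CH.zCLM n (s • c.1)).hasFDerivAt.add_const _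

lemma CH.contDiff_zTrans (n : ℕ) (c : Hpt n) (s : ℝ) : ContDiff ℝ (⊤ : ℕ∞) (zTrans n c s) := by
  rw [CH.zTrans_eq]
  exact (CH.zCLM n (s • c.1)).contDiff.add contDiff_const

lemma CH.continuous_zTrans (n : ℕ) (c : Hpt n) (s : ℝ) : Continuous (zTrans n c s) :=
  (CH.contDiff_zTrans n c s).continuous

lemma CH.zTrans_zTrans (n : ℕ) (c : Hpt n) (s t : ℝ) (x : Hpt n) :
    zTrans n c s (zTrans n c t x) = zTrans n c (t + s) x := by
  rw [CH.zTrans_apply, CH.zTrans_apply, CH.zTrans_apply]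
  refine Prod.ext ?_ ?_
  · show x.1 + t • c.1 + s • c.1 = x.1 + (t + s) • c.1
    rw [add_smul, add_assoc]
  · show x.2 + t * CH.ell n c.1 x.1 + t * c.2 + s * CH.ell n c.1 (x.1 + t • c.1) + s * c.2
      = x.2 + (t + s) * CH.ell n c.1 x.1 + (t + s) * c.2
    rw [CH.ell_add, CH.ell_smul, CH.ell_self]
    ring

lemma CH.zTrans_zero (n : ℕ) (c : Hpt n) (x : Hpt n) : zTrans n c 0 x = x := by
  rw [CH.zTrans_apply]
  simp

lemma CH.zTrans_inv_left (n : ℕ) (c : Hpt n) (s : ℝ) (x : Hpt n) :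
    zTrans n c (-s) (zTrans n c s x) = x := by
  rw [CH.zTrans_zTrans, add_neg_cancel, CH.zTrans_zero]

lemma CH.zTrans_inv_right (n : ℕ) (c : Hpt n) (s : ℝ) (x : Hpt n) :
    zTrans n c s (zTrans n c (-s) x) = x := by
  rw [CH.zTrans_zTrans, neg_add_cancel, CH.zTrans_zero]

/-- The right translation as a homeomorphism. -/
def CH.zHomeo (n : ℕ) (c : Hpt n) (s : ℝ) : Hpt n ≃ₜ Hpt n where
  toFun := zTrans n c s
  invFun := zTrans n c (-s)
  left_inv x := CH.zTrans_inv_left n c s x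
  right_inv x := CH.zTrans_inv_right n c s x
  continuous_toFun := CH.continuous_zTrans n c s
  continuous_invFun := CH.continuous_zTrans n c (-s)

lemma CH.measurableEmbedding_zTrans (n : ℕ) (c : Hpt n) (s : ℝ) :
    MeasurableEmbedding (zTrans n c s) :=
  (CH.zHomeo n c s).measurableEmbedding

lemma CH.measurePreserving_zTrans (n : ℕ) (c : Hpt n) (s : ℝ) :
    MeasurePreserving (zTrans n c s) volume volume := by
  have hfun : zTrans n c s = fun p : Hpt n =>
      ((p.1 + s • c.1, p.2 + (s * CH.ell n c.1 p.1 + s * c.2)) : Hpt n) := by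
    funext p
    rw [CH.zTrans_apply]
    refine Prod.ext rfl ?_
    show p.2 + s * CH.ell n c.1 p.1 + s * c.2 = p.2 + (s * CH.ell n c.1 p.1 + s * c.2)
    ring
  have h1 : MeasurePreserving (fun u : Fin (2 * n) → ℝ => u + s • c.1) volume volume :=
    measurePreserving_add_right volume (s • c.1)
  have hgm : Measurable (Function.uncurry
      (fun (u : Fin (2 * n) → ℝ) (t : ℝ) => t + (s * CH.ell n c.1 u + s * c.2))) := by
    apply Continuous.measurable
    exact continuous_snd.add
      ((continuous_const.mul ((CH.continuous_ell n c.1).comp continuous_fst)).add continuous_const)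
  have h2 := h1.skew_product (μc := (volume : Measure ℝ)) (μd := (volume : Measure ℝ)) hgm
    (Filter.Eventually.of_forall fun u =>
      map_add_right_eq_self volume (s * CH.ell n c.1 u + s * c.2))
  rw [hfun, Measure.volume_eq_prod]
  exact h2

lemma CH.integral_comp_zTrans (n : ℕ) (c : Hpt n) (s : ℝ) (g : Hpt n → ℝ) :
    ∫ x, g (zTrans n c s x) = ∫ x, g x :=
  (CH.measurePreserving_zTrans n c s).integral_comp (CH.measurableEmbedding_zTrans n c s) g

lemma CH.memLp_comp_zTrans (n : ℕ) (c : Hpt n) (s : ℝ) {P : ENNReal} {K : Set (Hpt n)}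
    (g : Hpt n → ℝ) (hg : MemLp g P (volume.restrict (zTrans n c s '' K))) :
    MemLp (fun x => g (zTrans n c s x)) P (volume.restrict K) :=
  hg.comp_measurePreserving ((CH.measurePreserving_zTrans n c s).restrict_image_emb
    (CH.measurableEmbedding_zTrans n c s) K)

lemma CH.memLp_restrict_mono {n : ℕ} {P : ENNReal} {s t : Set (Hpt n)} (hst : s ⊆ t)
    {f : Hpt n → ℝ} (hf : MemLp f P (volume.restrict t)) : MemLp f P (volume.restrict s) :=
  hf.mono_measure (Measure.restrict_mono hst le_rfl)

lemma CH.fderiv_comp_zTrans (n : ℕ) (c : Hpt n) (s : ℝ) (φ : Hpt n → ℝ)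
    (hφ : ContDiff ℝ (⊤ : ℕ∞) φ) (x : Hpt n) :
    fderiv ℝ (fun y => φ (zTrans n c s y)) x
      = (fderiv ℝ φ (zTrans n c s x)).comp (CH.zCLM n (s • c.1)) :=
  ((hφ.differentiable (by simp) (zTrans n c s x)).hasFDerivAt.comp x
    (CH.hasFDerivAt_zTrans n c s x)).fderiv

lemma CH.pair_decomp (n : ℕ) (u : Fin (2 * n) → ℝ) (r : ℝ) :
    ((u, r) : Hpt n) = ((u, (0 : ℝ)) : Hpt n) + r • (((0 : Fin (2 * n) → ℝ), (1 : ℝ)) : Hpt n) := by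
  refine Prod.ext ?_ ?_
  · show u = u + r • (0 : Fin (2 * n) → ℝ)
    simp
  · show r = 0 + r • (1 : ℝ)
    simp

lemma CH.ell_single (n : ℕ) (a : Fin (2 * n) → ℝ) (j : Fin (2 * n)) :
    CH.ell n a (Pi.single j 1) = - xcoef n ((a, 0) : Hpt n) j := by
  unfold CH.ell xcoef
  by_cases h : (j : ℕ) < n
  · rw [dif_pos h]
    rw [Finset.sum_eq_single (⟨(j : ℕ), h⟩ : Fin n)]
    · have h1 : (Pi.single j 1 : Fin (2 * n) → ℝ) (finL n ⟨(j : ℕ), h⟩) = 1 := by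
        have : finL n ⟨(j : ℕ), h⟩ = j := by ext; simp [finL]
        rw [this, Pi.single_eq_same]
      have h2 : (Pi.single j 1 : Fin (2 * n) → ℝ) (finR n ⟨(j : ℕ), h⟩) = 0 := by
        apply Pi.single_eq_of_ne
        simp only [finR, Fin.ne_iff_vne]
        omega
      rw [h1, h2]
      have h3 : finR n ⟨(j : ℕ), h⟩ = ⟨n + (j : ℕ), by omega⟩ := rfl
      rw [h3]
      ring
    · intro i _ hi
      have h1 : (Pi.single j 1 : Fin (2 * n) → ℝ) (finL n i) = 0 := by
        apply Pi.single_eq_of_ne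
        simp only [finL, Fin.ne_iff_vne]
        intro hc
        exact hi (by ext; simpa using hc)
      have h2 : (Pi.single j 1 : Fin (2 * n) → ℝ) (finR n i) = 0 := by
        apply Pi.single_eq_of_ne
        simp only [finR, Fin.ne_iff_vne]
        omega
      rw [h1, h2]; ring
    · intro hmem
      exact absurd (Finset.mem_univ _) hmem
  · rw [dif_neg h]
    have hj2 := j.isLt
    have hn : n ≤ (j : ℕ) := not_lt.mp h
    rw [Finset.sum_eq_single (⟨(j : ℕ) - n, by omega⟩ : Fin n)]
    · have h1 : (Pi.single j 1 : Fin (2 * n) → ℝ) (finR n ⟨(j : ℕ) - n, by omega⟩) = 1 := by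
        have : finR n ⟨(j : ℕ) - n, by omega⟩ = j := by
          ext; simp [finR]; omega
        rw [this, Pi.single_eq_same]
      have h2 : (Pi.single j 1 : Fin (2 * n) → ℝ) (finL n ⟨(j : ℕ) - n, by omega⟩) = 0 := by
        apply Pi.single_eq_of_ne
        simp only [finL, Fin.ne_iff_vne]
        omega
      rw [h1, h2]
      have h3 : finL n ⟨(j : ℕ) - n, by omega⟩ = ⟨(j : ℕ) - n, by omega⟩ := rfl
      rw [h3]
      ring
    · intro i _ hi
      have h1 : (Pi.single j 1 : Fin (2 * n) → ℝ) (finL n i) = 0 := by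
        apply Pi.single_eq_of_ne
        simp only [finL, Fin.ne_iff_vne]
        omega
      have h2 : (Pi.single j 1 : Fin (2 * n) → ℝ) (finR n i) = 0 := by
        apply Pi.single_eq_of_ne
        simp only [finR, Fin.ne_iff_vne]
        intro hc
        exact hi (by ext; simp; omega)
      rw [h1, h2]; ring
    · intro hmem
      exact absurd (Finset.mem_univ _) hmem

lemma CH.xcoef_shift (n : ℕ) (x : Hpt n) (a : Fin (2 * n) → ℝ) (t : ℝ) (j : Fin (2 * n)) :
    xcoef n ((x.1 + a, t) : Hpt n) j = xcoef n x j + xcoef n ((a, 0) : Hpt n) j := by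
  unfold xcoef
  by_cases h : (j : ℕ) < n
  · rw [dif_pos h, dif_pos h, dif_pos h]
    show -((x.1 + a) _) / 2 = _
    simp only [Pi.add_apply]
    ring
  · rw [dif_neg h, dif_neg h, dif_neg h]
    show ((x.1 + a) _) / 2 = _
    simp only [Pi.add_apply]
    ring

lemma CH.Tvf_comp (n : ℕ) (c : Hpt n) (s : ℝ) (φ : Hpt n → ℝ) (hφ : ContDiff ℝ (⊤ : ℕ∞) φ) (x : Hpt n) :
    Tvf n (fun y => φ (zTrans n c s y)) x = Tvf n φ (zTrans n c s x) := by
  unfold Tvf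
  rw [CH.fderiv_comp_zTrans n c s φ hφ x]
  rw [ContinuousLinearMap.comp_apply]
  congr 1
  rw [CH.zCLM_apply]
  refine Prod.ext rfl ?_
  show (1 : ℝ) + CH.ell n (s • c.1) 0 = 1
  rw [CH.ell_zero]; ring

lemma CH.Xop_comp (n : ℕ) (c : Hpt n) (s : ℝ) (φ : Hpt n → ℝ) (hφ : ContDiff ℝ (⊤ : ℕ∞) φ)
    (j : Fin (2 * n)) (x : Hpt n) :
    Xop n j (fun y => φ (zTrans n c s y)) x
      = Xop n j φ (zTrans n c s x)
        - 2 * xcoef n ((s • c.1, 0) : Hpt n) j * Tvf n φ (zTrans n c s x) := by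
  unfold Xop Tvf
  rw [CH.fderiv_comp_zTrans n c s φ hφ x]
  set D := fderiv ℝ φ (zTrans n c s x) with hD
  rw [ContinuousLinearMap.comp_apply, ContinuousLinearMap.comp_apply]
  rw [CH.zCLM_apply, CH.zCLM_apply]
  have e1 : ((Pi.single j 1, (0 : ℝ) + CH.ell n (s • c.1) (Pi.single j 1)) : Hpt n)
      = ((Pi.single j 1, (0 : ℝ)) : Hpt n)
        + (- xcoef n ((s • c.1, 0) : Hpt n) j) • (((0 : Fin (2 * n) → ℝ), (1 : ℝ)) : Hpt n) := by
    rw [← CH.pair_decomp]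
    refine Prod.ext rfl ?_
    show (0 : ℝ) + CH.ell n (s • c.1) (Pi.single j 1) = - xcoef n ((s • c.1, 0) : Hpt n) j
    rw [CH.ell_single]; ring
  have e2 : (((0 : Fin (2 * n) → ℝ), (1 : ℝ) + CH.ell n (s • c.1) 0) : Hpt n)
      = (((0 : Fin (2 * n) → ℝ), (1 : ℝ)) : Hpt n) := by
    refine Prod.ext rfl ?_
    show (1 : ℝ) + CH.ell n (s • c.1) 0 = 1
    rw [CH.ell_zero]; ring
  rw [e1, e2, map_add, _root_.map_smul]
  have e3 : xcoef n (zTrans n c s x) j = xcoef n x j + xcoef n ((s • c.1, 0) : Hpt n) j := by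
    rw [CH.zTrans_apply]
    exact CH.xcoef_shift n x (s • c.1) _ j
  rw [e3]
  simp only [smul_eq_mul]
  ring

lemma CH.xcoef_finL (n : ℕ) (x : Hpt n) (i : Fin n) :
    xcoef n x (finL n i) = -(x.1 (finR n i)) / 2 := by
  have h : ((finL n i : ℕ)) < n := i.isLt
  unfold xcoef
  rw [dif_pos h]
  exact rfl

lemma CH.xcoef_finR (n : ℕ) (x : Hpt n) (i : Fin n) :
    xcoef n x (finR n i) = x.1 (finL n i) / 2 := by
  have h : ¬ ((finR n i : ℕ)) < n := by
    have := i.isLt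
    simp only [finR]
    omega
  have hidx : (⟨((finR n i : ℕ)) - n, by have := (finR n i).isLt; omega⟩ : Fin (2 * n))
      = finL n i := by
    ext
    simp only [finR, finL]
    omega
  unfold xcoef
  rw [dif_neg h, hidx]

lemma CH.sum_coef (n : ℕ) (cY c : Hpt n) (s : ℝ) :
    ∑ l, cY.1 l * (2 * xcoef n ((s • c.1, 0) : Hpt n) l) = -(s * commCoef n cY c) := by
  rw [CH.sum_split n (fun l => cY.1 l * (2 * xcoef n ((s • c.1, 0) : Hpt n) l))]
  have h1 : ∀ i : Fin n, cY.1 (finL n i) * (2 * xcoef n ((s • c.1, 0) : Hpt n) (finL n i))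
      = -(s * (cY.1 (finL n i) * c.1 (finR n i))) := by
    intro i
    rw [CH.xcoef_finL]
    show cY.1 (finL n i) * (2 * (-((s • c.1) (finR n i)) / 2)) = _
    simp only [Pi.smul_apply, smul_eq_mul]
    ring
  have h2 : ∀ i : Fin n, cY.1 (finR n i) * (2 * xcoef n ((s • c.1, 0) : Hpt n) (finR n i))
      = s * (cY.1 (finR n i) * c.1 (finL n i)) := by
    intro i
    rw [CH.xcoef_finR]
    show cY.1 (finR n i) * (2 * ((s • c.1) (finL n i) / 2)) = _
    simp only [Pi.smul_apply, smul_eq_mul]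
    ring
  rw [Finset.sum_congr rfl fun i _ => h1 i, Finset.sum_congr rfl fun i _ => h2 i]
  unfold commCoef
  rw [Finset.mul_sum, ← Finset.sum_add_distrib, ← Finset.sum_neg_distrib]
  refine Finset.sum_congr rfl fun i _ => ?_
  ring

lemma CH.Zop_comp (n : ℕ) (cY c : Hpt n) (s : ℝ) (φ : Hpt n → ℝ) (hφ : ContDiff ℝ (⊤ : ℕ∞) φ)
    (x : Hpt n) :
    Zop n cY (fun y => φ (zTrans n c s y)) x
      = Zop n cY φ (zTrans n c s x) + s * commCoef n cY c * Tvf n φ (zTrans n c s x) := by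
  unfold Zop
  rw [CH.Tvf_comp n c s φ hφ x]
  have h : ∑ l, cY.1 l * Xop n l (fun y => φ (zTrans n c s y)) x
      = ∑ l, (cY.1 l * Xop n l φ (zTrans n c s x)
          - cY.1 l * (2 * xcoef n ((s • c.1, 0) : Hpt n) l) * Tvf n φ (zTrans n c s x)) := by
    refine Finset.sum_congr rfl fun l _ => ?_
    rw [CH.Xop_comp n c s φ hφ l x]
    ring
  rw [h, Finset.sum_sub_distrib, ← Finset.sum_mul, CH.sum_coef n cY c s]
  ring

lemma CH.fderiv_zero_of_nmem (n : ℕ) (φ : Hpt n → ℝ) {x : Hpt n} (hx : x ∉ tsupport φ) :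
    fderiv ℝ φ x = 0 := by
  have hmem : (tsupport φ)ᶜ ∈ nhds x := (isClosed_tsupport φ).isOpen_compl.mem_nhds hx
  have h : φ =ᶠ[nhds x] (fun _ => (0 : ℝ)) := by
    filter_upwards [hmem] with y hy
    exact image_eq_zero_of_notMem_tsupport hy
  rw [h.fderiv_eq]
  exact fderiv_const_apply 0

lemma CH.Zop_vanish (n : ℕ) (c : Hpt n) (φ : Hpt n → ℝ) {x : Hpt n} (hx : x ∉ tsupport φ) :
    Zop n c φ x = 0 := by
  simp [Zop, Xop, Tvf, CH.fderiv_zero_of_nmem n φ hx]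

lemma CH.Tvf_vanish (n : ℕ) (φ : Hpt n → ℝ) {x : Hpt n} (hx : x ∉ tsupport φ) :
    Tvf n φ x = 0 := by
  simp [Tvf, CH.fderiv_zero_of_nmem n φ hx]

lemma CH.continuous_xcoef (n : ℕ) (j : Fin (2 * n)) : Continuous (fun x : Hpt n => xcoef n x j) := by
  unfold xcoef
  by_cases h : (j : ℕ) < n
  · simp only [dif_pos h]
    fun_prop
  · simp only [dif_neg h]
    fun_prop

lemma CH.continuous_Tvf (n : ℕ) (φ : Hpt n → ℝ) (hφ : ContDiff ℝ (⊤ : ℕ∞) φ) :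
    Continuous (Tvf n φ) := by
  have hD : Continuous (fderiv ℝ φ) := (hφ.fderiv_right (m := (⊤ : ℕ∞)) (by simp)).continuous
  exact hD.clm_apply continuous_const

lemma CH.continuous_Zop (n : ℕ) (c : Hpt n) (φ : Hpt n → ℝ) (hφ : ContDiff ℝ (⊤ : ℕ∞) φ) :
    Continuous (Zop n c φ) := by
  have hD : Continuous (fderiv ℝ φ) := (hφ.fderiv_right (m := (⊤ : ℕ∞)) (by simp)).continuous
  unfold Zop Xop Tvf
  refine Continuous.add (continuous_finset_sum _ fun l _ => Continuous.mul continuous_const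
    (Continuous.add (hD.clm_apply continuous_const)
      ((CH.continuous_xcoef n l).mul (hD.clm_apply continuous_const)))) ?_
  exact continuous_const.mul (hD.clm_apply continuous_const)

lemma CH.integ_mul (n : ℕ) {p : ℝ} (hp : 1 ≤ p) {K : Set (Hpt n)} (hK : IsCompact K)
    {f g : Hpt n → ℝ} (hf : MemLp f (ENNReal.ofReal p) (volume.restrict K))
    (hgc : Continuous g) (hg0 : ∀ x ∉ K, g x = 0) :
    Integrable (fun x => f x * g x) volume := by
  have hKm : MeasurableSet K := hK.isClosed.measurableSet
  have heq : (fun x => f x * g x) = Set.indicator K (fun x => f x * g x) := by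
    funext x
    by_cases hx : x ∈ K
    · rw [Set.indicator_of_mem hx]
    · rw [Set.indicator_of_notMem hx, hg0 x hx, mul_zero]
  rw [heq, integrable_indicator_iff hKm]
  haveI : IsFiniteMeasure (volume.restrict K) :=
    ⟨by rw [Measure.restrict_apply_univ]; exact hK.measure_lt_top⟩
  have hfi : Integrable f (volume.restrict K) := hf.integrable (ENNReal.one_le_ofReal.mpr hp)
  have hgb : ∃ C, ∀ x, ‖g x‖ ≤ C := by
    have hcs : HasCompactSupport g := HasCompactSupport.intro hK hg0
    exact hgc.bounded_above_of_compact_support hcs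
  have h := hfi.bdd_mul hgc.aestronglyMeasurable (Filter.Eventually.of_forall hgb.choose_spec)
  exact h.congr (Filter.Eventually.of_forall fun x => mul_comm (g x) (f x))

lemma CH.isTest_comp (n : ℕ) (c : Hpt n) (s : ℝ) {Ω : Set (Hpt n)} {φ : Hpt n → ℝ}
    (hφ : IsTest n {x | x ∈ Ω ∧ zTrans n c s x ∈ Ω} φ) :
    IsTest n Ω (fun y => φ (zTrans n c (-s) y)) := by
  refine ⟨hφ.smooth.comp (CH.contDiff_zTrans n c (-s)), ?_, ?_⟩
  · exact hφ.cpt.comp_isClosedEmbedding (CH.zHomeo n c (-s)).isClosedEmbedding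
  · have h1 : tsupport (fun y => φ (zTrans n c (-s) y)) ⊆ zTrans n c (-s) ⁻¹' tsupport φ := by
      refine closure_minimal ?_ ((isClosed_tsupport φ).preimage (CH.continuous_zTrans n c (-s)))
      intro y hy
      exact subset_closure hy
    intro y hy
    have h2 := hφ.supp (h1 hy)
    have h3 := h2.2
    rwa [CH.zTrans_inv_right] at h3

end CHaux

/-- Campbell–Hausdorff commutation formula for weak
derivatives and Nirenberg differences along left invariant vector fields. -/
theorem campbell_hausdorff_commutation
    (n : ℕ) (hn : 1 ≤ n) (Ω : Set (Hpt n)) (hΩ : IsOpen Ω)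
    (p : ℝ) (hp : 1 ≤ p)
    (cY cZ : Hpt n) (s : ℝ)
    (v : Hpt n → ℝ) (Dv : Hpt n → Fin (2 * n) → ℝ)
    (hgrad : ∀ j : Fin (2 * n), HasWeakDerivAlong n (Xop n j) Ω v (fun x => Dv x j))
    (hv : MemLp v (ENNReal.ofReal p) (volume.restrict Ω))
    (hDv : MemLp (fun x => vnorm (Dv x)) (ENNReal.ofReal p) (volume.restrict Ω))
    (gY : Hpt n → ℝ)
    (hgY : HasWeakDerivAlong n (Zop n cY) Ω v gY)
    (hgYp : MemLp gY (ENNReal.ofReal p) (volume.restrict Ω))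
    (w : Hpt n → ℝ)
    (hw : HasWeakDerivAlong n (fun φ x => commCoef n cY cZ * Tvf n φ x) Ω v w)
    (hwp : ∀ K : Set (Hpt n), IsCompact K → K ⊆ Ω →
      MemLp w (ENNReal.ofReal p) (volume.restrict K)) :
    (HasWeakDerivAlong n (Zop n cY) {x | x ∈ Ω ∧ zTrans n cZ s x ∈ Ω}
        (fun x => v (zTrans n cZ s x))
        (fun x => gY (zTrans n cZ s x) + s * w (zTrans n cZ s x))) ∧
    (∀ K : Set (Hpt n), IsCompact K → K ⊆ {x | x ∈ Ω ∧ zTrans n cZ s x ∈ Ω} →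
      MemLp (fun x => gY (zTrans n cZ s x) + s * w (zTrans n cZ s x))
        (ENNReal.ofReal p) (volume.restrict K)) ∧
    (s ≠ 0 → HasWeakDerivAlong n (Zop n cY) {x | x ∈ Ω ∧ zTrans n cZ s x ∈ Ω}
        (delta1 n cZ s v)
        (fun x => gY (zTrans n cZ s x) - gY x + s * w (zTrans n cZ s x))) := by
  have hΩ'sub : {x | x ∈ Ω ∧ zTrans n cZ s x ∈ Ω} ⊆ Ω := fun x hx => hx.1
  have part1 : HasWeakDerivAlong n (Zop n cY) {x | x ∈ Ω ∧ zTrans n cZ s x ∈ Ω}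
      (fun x => v (zTrans n cZ s x))
      (fun x => gY (zTrans n cZ s x) + s * w (zTrans n cZ s x)) := by
    intro φ hφ
    have hψt : IsTest n Ω (fun y => φ (zTrans n cZ (-s) y)) := CH.isTest_comp n cZ s hφ
    set ψ : Hpt n → ℝ := fun y => φ (zTrans n cZ (-s) y) with hψdef
    have hKc : IsCompact (tsupport ψ) := hψt.cpt
    have hKΩ : tsupport ψ ⊆ Ω := hψt.supp
    have hvan : ∀ x ∉ tsupport ψ, ψ x = 0 := fun x hx => image_eq_zero_of_notMem_tsupport hx
    have hgYK : MemLp gY (ENNReal.ofReal p) (volume.restrict (tsupport ψ)) :=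
      CH.memLp_restrict_mono hKΩ hgYp
    have hwK : MemLp w (ENNReal.ofReal p) (volume.restrict (tsupport ψ)) := hwp _ hKc hKΩ
    have hvK : MemLp v (ENNReal.ofReal p) (volume.restrict (tsupport ψ)) :=
      CH.memLp_restrict_mono hKΩ hv
    have hψc : Continuous ψ := hψt.smooth.continuous
    have int1 : Integrable (fun x => gY x * ψ x) volume := CH.integ_mul n hp hKc hgYK hψc hvan
    have int2 : Integrable (fun x => w x * ψ x) volume := CH.integ_mul n hp hKc hwK hψc hvan
    have int3 : Integrable (fun x => v x * Zop n cY ψ x) volume :=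
      CH.integ_mul n hp hKc hvK (CH.continuous_Zop n cY ψ hψt.smooth)
        (fun x hx => CH.Zop_vanish n cY ψ hx)
    have int4 : Integrable (fun x => v x * (commCoef n cY cZ * Tvf n ψ x)) volume :=
      CH.integ_mul n hp hKc hvK (continuous_const.mul (CH.continuous_Tvf n ψ hψt.smooth))
        (fun x hx => by rw [CH.Tvf_vanish n ψ hx, mul_zero])
    have hg2 : ∫ x, gY x * ψ x = -∫ x, v x * Zop n cY ψ x := hgY ψ hψt
    have hw2 : ∫ x, w x * ψ x = -∫ x, v x * (commCoef n cY cZ * Tvf n ψ x) := hw ψ hψt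
    have hcv : ∀ x, ψ (zTrans n cZ s x) = φ x := fun x => by
      rw [hψdef]
      exact congrArg φ (CH.zTrans_inv_left n cZ s x)
    calc ∫ x, (gY (zTrans n cZ s x) + s * w (zTrans n cZ s x)) * φ x
        = ∫ x, (fun y => (gY y + s * w y) * ψ y) (zTrans n cZ s x) := by
          refine integral_congr_ae (Filter.Eventually.of_forall fun x => ?_)
          simp only
          rw [hcv x]
      _ = ∫ y, (gY y + s * w y) * ψ y :=
          CH.integral_comp_zTrans n cZ s (fun y => (gY y + s * w y) * ψ y)
      _ = ∫ y, (gY y * ψ y + s * (w y * ψ y)) := by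
          refine integral_congr_ae (Filter.Eventually.of_forall fun y => ?_)
          ring
      _ = (∫ y, gY y * ψ y) + s * ∫ y, w y * ψ y := by
          rw [integral_add int1 (int2.const_mul s), integral_const_mul s _]
      _ = -(∫ y, v y * Zop n cY ψ y) + s * -(∫ y, v y * (commCoef n cY cZ * Tvf n ψ y)) := by
          rw [hg2, hw2]
      _ = -((∫ y, v y * Zop n cY ψ y) + ∫ y, s * (v y * (commCoef n cY cZ * Tvf n ψ y))) := by
          rw [integral_const_mul s _]
          ring
      _ = -∫ y, (v y * Zop n cY ψ y + s * (v y * (commCoef n cY cZ * Tvf n ψ y))) := by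
          rw [integral_add int3 (int4.const_mul s)]
      _ = -∫ y, (fun z => v (zTrans n cZ s z) * Zop n cY φ z) (zTrans n cZ (-s) y) := by
          congr 1
          refine integral_congr_ae (Filter.Eventually.of_forall fun y => ?_)
          simp only
          rw [CH.zTrans_inv_right n cZ s y]
          have hZ : Zop n cY ψ y
              = Zop n cY φ (zTrans n cZ (-s) y)
                + (-s) * commCoef n cY cZ * Tvf n φ (zTrans n cZ (-s) y) :=
            CH.Zop_comp n cY cZ (-s) φ hφ.smooth y
          have hT : Tvf n ψ y = Tvf n φ (zTrans n cZ (-s) y) :=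
            CH.Tvf_comp n cZ (-s) φ hφ.smooth y
          rw [hZ, hT]
          ring
      _ = -∫ z, v (zTrans n cZ s z) * Zop n cY φ z := by
          exact congrArg Neg.neg
            (CH.integral_comp_zTrans n cZ (-s) (fun z => v (zTrans n cZ s z) * Zop n cY φ z))
  have part2 : ∀ K : Set (Hpt n), IsCompact K → K ⊆ {x | x ∈ Ω ∧ zTrans n cZ s x ∈ Ω} →
      MemLp (fun x => gY (zTrans n cZ s x) + s * w (zTrans n cZ s x)) (ENNReal.ofReal p)
        (volume.restrict K) := by
    intro K hKc hKΩ'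
    have hτK : IsCompact (zTrans n cZ s '' K) := hKc.image (CH.continuous_zTrans n cZ s)
    have hτKΩ : zTrans n cZ s '' K ⊆ Ω := by
      rintro _ ⟨x, hx, rfl⟩
      exact (hKΩ' hx).2
    have h3 : MemLp (fun x => gY (zTrans n cZ s x)) (ENNReal.ofReal p) (volume.restrict K) :=
      CH.memLp_comp_zTrans n cZ s gY (CH.memLp_restrict_mono hτKΩ hgYp)
    have h4 : MemLp (fun x => w (zTrans n cZ s x)) (ENNReal.ofReal p) (volume.restrict K) :=
      CH.memLp_comp_zTrans n cZ s w (hwp _ hτK hτKΩ)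
    exact h3.add (h4.const_mul s)
  refine ⟨part1, part2, fun _hs => ?_⟩
  intro φ hφ
  have hφΩ : IsTest n Ω φ := ⟨hφ.smooth, hφ.cpt, hφ.supp.trans hΩ'sub⟩
  have hKc : IsCompact (tsupport φ) := hφ.cpt
  have hKΩ' : tsupport φ ⊆ {x | x ∈ Ω ∧ zTrans n cZ s x ∈ Ω} := hφ.supp
  have hKΩ : tsupport φ ⊆ Ω := hKΩ'.trans hΩ'sub
  have hτKΩ : zTrans n cZ s '' tsupport φ ⊆ Ω := by
    rintro _ ⟨x, hx, rfl⟩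
    exact (hKΩ' hx).2
  have hvan : ∀ x ∉ tsupport φ, φ x = 0 := fun x hx => image_eq_zero_of_notMem_tsupport hx
  have hZvan : ∀ x ∉ tsupport φ, Zop n cY φ x = 0 := fun x hx => CH.Zop_vanish n cY φ hx
  have hφc : Continuous φ := hφ.smooth.continuous
  have hZc : Continuous (Zop n cY φ) := CH.continuous_Zop n cY φ hφ.smooth
  have hgτ : MemLp (fun x => gY (zTrans n cZ s x) + s * w (zTrans n cZ s x))
      (ENNReal.ofReal p) (volume.restrict (tsupport φ)) := part2 _ hKc hKΩ'
  have hgYK : MemLp gY (ENNReal.ofReal p) (volume.restrict (tsupport φ)) :=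
    CH.memLp_restrict_mono hKΩ hgYp
  have hvτ : MemLp (fun x => v (zTrans n cZ s x)) (ENNReal.ofReal p)
      (volume.restrict (tsupport φ)) :=
    CH.memLp_comp_zTrans n cZ s v (CH.memLp_restrict_mono hτKΩ hv)
  have hvK : MemLp v (ENNReal.ofReal p) (volume.restrict (tsupport φ)) :=
    CH.memLp_restrict_mono hKΩ hv
  have intA : Integrable (fun x => (gY (zTrans n cZ s x) + s * w (zTrans n cZ s x)) * φ x)
      volume := CH.integ_mul n hp hKc hgτ hφc hvan
  have intB : Integrable (fun x => gY x * φ x) volume := CH.integ_mul n hp hKc hgYK hφc hvan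
  have intC : Integrable (fun x => v (zTrans n cZ s x) * Zop n cY φ x) volume :=
    CH.integ_mul n hp hKc hvτ hZc hZvan
  have intD : Integrable (fun x => v x * Zop n cY φ x) volume :=
    CH.integ_mul n hp hKc hvK hZc hZvan
  have E1 : ∫ x, (gY (zTrans n cZ s x) + s * w (zTrans n cZ s x)) * φ x
      = -∫ x, v (zTrans n cZ s x) * Zop n cY φ x := part1 φ hφ
  have E2 : ∫ x, gY x * φ x = -∫ x, v x * Zop n cY φ x := hgY φ hφΩ
  calc ∫ x, (gY (zTrans n cZ s x) - gY x + s * w (zTrans n cZ s x)) * φ x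
      = ∫ x, ((gY (zTrans n cZ s x) + s * w (zTrans n cZ s x)) * φ x - gY x * φ x) := by
        refine integral_congr_ae (Filter.Eventually.of_forall fun x => ?_)
        ring
    _ = (∫ x, (gY (zTrans n cZ s x) + s * w (zTrans n cZ s x)) * φ x) - ∫ x, gY x * φ x :=
        integral_sub intA intB
    _ = (-∫ x, v (zTrans n cZ s x) * Zop n cY φ x) - -∫ x, v x * Zop n cY φ x := by
        rw [E1, E2]
    _ = -((∫ x, v (zTrans n cZ s x) * Zop n cY φ x) - ∫ x, v x * Zop n cY φ x) := by ring
    _ = -∫ x, (v (zTrans n cZ s x) * Zop n cY φ x - v x * Zop n cY φ x) := by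
        rw [integral_sub intC intD]
    _ = -∫ x, delta1 n cZ s v x * Zop n cY φ x := by
        refine congrArg Neg.neg (integral_congr_ae (Filter.Eventually.of_forall fun x => ?_))
        unfold delta1
        ring
end

section
/- (Pointwise algebraic inequality.) Let 1 < p ≤ 2 and let P, Q ∈ ℝ^{N×2n}. Then (1 + |P|² + |Q|²)^{p/2} ≤ 3(1 + |P|²)^{p/2} + 3(1 + |P|² + |Q|²)^{(p−2)/2} |Q − P|². -/
open MeasureTheory Real

private lemma mnorm_sq_eq' {N M : ℕ} (P : Fin N → Fin M → ℝ) :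
    mnorm P ^ 2 = ∑ i, ∑ j, (P i j) ^ 2 :=
  Real.sq_sqrt (Finset.sum_nonneg fun i _ => Finset.sum_nonneg fun j _ => sq_nonneg _)

/-- Pointwise algebraic inequality for `1 < p ≤ 2`. -/
theorem pointwise_algebraic_inequality
    (N M : ℕ) (p : ℝ) (hp1 : 1 < p) (hp2 : p ≤ 2)
    (P Q : Fin N → Fin M → ℝ) :
    (1 + mnorm P ^ 2 + mnorm Q ^ 2) ^ (p / 2)
      ≤ 3 * (1 + mnorm P ^ 2) ^ (p / 2)
        + 3 * (1 + mnorm P ^ 2 + mnorm Q ^ 2) ^ ((p - 2) / 2) * mnorm (Q - P) ^ 2 := by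
  rw [mnorm_sq_eq', mnorm_sq_eq', mnorm_sq_eq']
  set b := ∑ i, ∑ j, (P i j)^2 with hbdef
  set c := ∑ i, ∑ j, (Q i j)^2 with hcdef
  set d := ∑ i, ∑ j, ((Q-P) i j)^2 with hddef
  have hb : 0 ≤ b := Finset.sum_nonneg fun i _ => Finset.sum_nonneg fun j _ => sq_nonneg _
  have hc : 0 ≤ c := Finset.sum_nonneg fun i _ => Finset.sum_nonneg fun j _ => sq_nonneg _
  have hd : 0 ≤ d := Finset.sum_nonneg fun i _ => Finset.sum_nonneg fun j _ => sq_nonneg _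
  have hcd : c ≤ 2 * d + 2 * b := by
    rw [hbdef, hcdef, hddef, Finset.mul_sum, Finset.mul_sum, ← Finset.sum_add_distrib]
    refine Finset.sum_le_sum fun i _ => ?_
    rw [Finset.mul_sum, Finset.mul_sum, ← Finset.sum_add_distrib]
    refine Finset.sum_le_sum fun j _ => ?_
    simp only [Pi.sub_apply]
    nlinarith [sq_nonneg (Q i j - 2 * P i j)]
  set a := 1 + b with hadef
  set S := a + c with hSdef
  have ha : 0 < a := by positivity
  have hS : 0 < S := by positivity
  have haS : a ≤ S := by linarith
  set e := (p - 2) / 2 with hedef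
  have he : e ≤ 0 := by rw [hedef]; linarith
  have hSe : (0:ℝ) < S ^ e := Real.rpow_pos_of_pos hS e
  have hae : (0:ℝ) < a ^ e := Real.rpow_pos_of_pos ha e
  have hmono : S ^ e ≤ a ^ e := Real.rpow_le_rpow_of_nonpos ha haS he
  have hsplit : S ^ (p / 2) = S ^ e * S := by
    rw [hedef, show p / 2 = (p-2)/2 + 1 by ring, Real.rpow_add hS, Real.rpow_one]
  have hasplit : a ^ (p / 2) = a ^ e * a := by
    rw [hedef, show p / 2 = (p-2)/2 + 1 by ring, Real.rpow_add ha, Real.rpow_one]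
  rw [hsplit, hasplit]
  have h1 : S ^ e * a ≤ a ^ e * a := by nlinarith
  have h2 : S ^ e * c ≤ 2 * (S ^ e * d) + 2 * (a ^ e * a) := by
    have : S ^ e * c ≤ S ^ e * (2 * d + 2 * b) := by nlinarith
    nlinarith [mul_le_mul_of_nonneg_right hmono (show (0:ℝ) ≤ b by linarith)]
  have hSec : S ^ e * S = S ^ e * a + S ^ e * c := by rw [hSdef]; ring
  nlinarith [mul_nonneg hSe.le hd]
end
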